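/- arXiv:2410.18604 — 2 statements merged into one kernel-verified Lean document; each statement's English description precedes it below -/
import Mathlib

section
/- For all i, j ∈ I with i ≠ j and a_{ij} = 0, the automorphisms σ_i and σ_j of 𝒜 commute: σ_i ∘ σ_j = σ_j ∘ σ_i. -/
/-!
Braid group action on the twisted semi-derived Hall algebra (Contu, arXiv:2410.18604).

We work with the algebra `𝒜 = 𝒮𝒟ℋ_tw(C^b(𝒫))` given by its presentation
(Proposition `prop_presenentation_semiderived_E_i` of the paper): generators
`E_{i,m}`, `K_{i,m}`, `K_{i,m}⁻¹` (`i ∈ I`, `m ∈ ℤ`) over `F = ℚ(v^{1/2})`,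
subject to the relations (SD0)–(SD5).
-/

noncomputable section

namespace SDHall

/-- The field `ℚ(v^{1/2})` of rational functions over `ℚ` in one indeterminate `v^{1/2}`. -/
abbrev F₀ : Type := RatFunc ℚ

/-- The indeterminate `v^{1/2}`. -/
def sq : F₀ := RatFunc.X

/-- `v := (v^{1/2})²`. -/
def v : F₀ := sq ^ 2

/-- The sign `(-1)^n` for an integer `n`. -/
def sgn (n : ℤ) : ℤ := (((-1 : ℤˣ) ^ n : ℤˣ) : ℤ)

/-- Generators `E_{i,m}`, `K_{i,m}`, `K_{i,m}⁻¹` of the presented algebra. -/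
inductive Gen (I : Type) : Type
  | E : I → ℤ → Gen I
  | K : I → ℤ → Gen I
  | Kinv : I → ℤ → Gen I

variable {I : Type}

def e (i : I) (m : ℤ) : FreeAlgebra F₀ (Gen I) := FreeAlgebra.ι F₀ (Gen.E i m)
def κ (i : I) (m : ℤ) : FreeAlgebra F₀ (Gen I) := FreeAlgebra.ι F₀ (Gen.K i m)
def κ' (i : I) (m : ℤ) : FreeAlgebra F₀ (Gen I) := FreeAlgebra.ι F₀ (Gen.Kinv i m)

/-- The defining relations (SD0)–(SD5) of the twisted semi-derived Hall algebra:
(SD0) `K_{i,m}K_{i,m}⁻¹ = 1 = K_{i,m}⁻¹K_{i,m}`;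
(SD1) each `K_{i,m}` is central;
(SD2) `E_{i,m}E_{j,m} = E_{j,m}E_{i,m}` if `a_{ij} = 0`;
(SD3) `E_{i,m}²E_{j,m} − (v+v⁻¹)E_{i,m}E_{j,m}E_{i,m} + E_{j,m}E_{i,m}² = 0` if `a_{ij} = −1`;
(SD4) `E_{i,m+1}E_{j,m} = v^{a_{ij}}E_{j,m}E_{i,m+1} + δ_{ij}(1−v²)K_{i,m}`
      (split into the cases `i ≠ j` and `i = j`);
(SD5) `E_{j,r}E_{i,l} = v^{−(−1)^{r−l}a_{ij}}E_{i,l}E_{j,r}` for `r > l+1`. -/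
inductive Rel (a : I → I → ℤ) : FreeAlgebra F₀ (Gen I) → FreeAlgebra F₀ (Gen I) → Prop
  | sd0a (i : I) (m : ℤ) : Rel a (κ i m * κ' i m) 1
  | sd0b (i : I) (m : ℤ) : Rel a (κ' i m * κ i m) 1
  | sd1 (i : I) (m : ℤ) (x : FreeAlgebra F₀ (Gen I)) : Rel a (κ i m * x) (x * κ i m)
  | sd2 (i j : I) (m : ℤ) : a i j = 0 → Rel a (e i m * e j m) (e j m * e i m)
  | sd3 (i j : I) (m : ℤ) : a i j = -1 →
      Rel a (e i m ^ 2 * e j m - (v + v⁻¹) • (e i m * e j m * e i m) + e j m * e i m ^ 2) 0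
  | sd4_ne (i j : I) (m : ℤ) : i ≠ j →
      Rel a (e i (m + 1) * e j m) ((v ^ (a i j)) • (e j m * e i (m + 1)))
  | sd4_eq (i : I) (m : ℤ) :
      Rel a (e i (m + 1) * e i m)
        ((v ^ (a i i)) • (e i m * e i (m + 1)) + ((1 : F₀) - v ^ 2) • κ i m)
  | sd5 (i j : I) (r l : ℤ) : r > l + 1 →
      Rel a (e j r * e i l) ((v ^ (-(sgn (r - l)) * a i j)) • (e i l * e j r))

/-- The twisted semi-derived Hall algebra `𝒜`, presented by generators and relations. -/
abbrev A (a : I → I → ℤ) : Type := RingQuot (Rel a)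

/-- The generator `E_{i,m}` of `𝒜`. -/
def E (a : I → I → ℤ) (i : I) (m : ℤ) : A a := RingQuot.mkAlgHom F₀ (Rel a) (e i m)

/-- The generator `K_{i,m}` of `𝒜`. -/
def K (a : I → I → ℤ) (i : I) (m : ℤ) : A a := RingQuot.mkAlgHom F₀ (Rel a) (κ i m)

/-- The generator `K_{i,m}⁻¹` of `𝒜`. -/
def Kinv (a : I → I → ℤ) (i : I) (m : ℤ) : A a := RingQuot.mkAlgHom F₀ (Rel a) (κ' i m)

/-- `a` is a simply-laced generalized Cartan matrix: symmetric, `a_{ii} = 2`,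
and `a_{ij} ∈ {0, −1}` for `i ≠ j`. -/
def IsCartan (a : I → I → ℤ) : Prop :=
  (∀ i j, a i j = a j i) ∧ (∀ i, a i i = 2) ∧ ∀ i j, i ≠ j → a i j = 0 ∨ a i j = -1

/-- The element `(v^{1/2}E_{i,m}E_{j,m} − v^{−1/2}E_{j,m}E_{i,m})/(v − v^{−1})` of `𝒜`. -/
def T (a : I → I → ℤ) (i j : I) (m : ℤ) : A a :=
  (v - v⁻¹)⁻¹ • (sq • (E a i m * E a j m) - sq⁻¹ • (E a j m * E a i m))

/-- The defining formulas for the braid group operator `σᵢ` on the generators: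
`σᵢ(E_{i,m}) = E_{i,m+1}K_{i,m}⁻¹`;
`σᵢ(E_{j,m}) = (v^{1/2}E_{i,m}E_{j,m} − v^{−1/2}E_{j,m}E_{i,m})/(v − v^{−1})` if `a_{ij} = −1`;
`σᵢ(E_{j,m}) = E_{j,m}` if `a_{ij} = 0`;
`σᵢ(K_{i,m}) = K_{i,m}⁻¹`; `σᵢ(K_{j,m}) = K_{i,m}K_{j,m}` if `a_{ij} = −1`;
`σᵢ(K_{j,m}) = K_{j,m}` if `a_{ij} = 0`. -/
def SigmaSpec (a : I → I → ℤ) (i : I) (σ : A a →ₐ[F₀] A a) : Prop :=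
  (∀ m : ℤ, σ (E a i m) = E a i (m + 1) * Kinv a i m) ∧
  (∀ (j : I) (m : ℤ), a i j = -1 → σ (E a j m) = T a i j m) ∧
  (∀ (j : I) (m : ℤ), a i j = 0 → σ (E a j m) = E a j m) ∧
  (∀ m : ℤ, σ (K a i m) = Kinv a i m) ∧
  (∀ (j : I) (m : ℤ), a i j = -1 → σ (K a j m) = K a i m * K a j m) ∧
  (∀ (j : I) (m : ℤ), a i j = 0 → σ (K a j m) = K a j m)

/-- The defining formulas for the inverse operator `σᵢ'` on the generators:
`σᵢ'(E_{i,m}) = E_{i,m−1}K_{i,m−1}⁻¹`;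
`σᵢ'(E_{j,m}) = (v^{1/2}E_{j,m}E_{i,m} − v^{−1/2}E_{i,m}E_{j,m})/(v − v^{−1})` if `a_{ij} = −1`;
`σᵢ'(E_{j,m}) = E_{j,m}` if `a_{ij} = 0`;
`σᵢ'(K_{i,m}) = K_{i,m}⁻¹`; `σᵢ'(K_{j,m}) = K_{i,m}K_{j,m}` if `a_{ij} = −1`;
`σᵢ'(K_{j,m}) = K_{j,m}` if `a_{ij} = 0`. -/
def SigmaSpec' (a : I → I → ℤ) (i : I) (σ : A a →ₐ[F₀] A a) : Prop :=
  (∀ m : ℤ, σ (E a i m) = E a i (m - 1) * Kinv a i (m - 1)) ∧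
  (∀ (j : I) (m : ℤ), a i j = -1 → σ (E a j m) = T a j i m) ∧
  (∀ (j : I) (m : ℤ), a i j = 0 → σ (E a j m) = E a j m) ∧
  (∀ m : ℤ, σ (K a i m) = Kinv a i m) ∧
  (∀ (j : I) (m : ℤ), a i j = -1 → σ (K a j m) = K a i m * K a j m) ∧
  (∀ (j : I) (m : ℤ), a i j = 0 → σ (K a j m) = K a j m)

section Aux

variable {a : I → I → ℤ}

lemma K_mul_Kinv (i : I) (m : ℤ) : K a i m * Kinv a i m = 1 := by
  rw [K, Kinv, ← map_mul, ← map_one (RingQuot.mkAlgHom F₀ (Rel a))]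
  exact RingQuot.mkAlgHom_rel F₀ (Rel.sd0a i m)

lemma Kinv_mul_K (i : I) (m : ℤ) : Kinv a i m * K a i m = 1 := by
  rw [K, Kinv, ← map_mul, ← map_one (RingQuot.mkAlgHom F₀ (Rel a))]
  exact RingQuot.mkAlgHom_rel F₀ (Rel.sd0b i m)

lemma K_central (i : I) (m : ℤ) (x : A a) : K a i m * x = x * K a i m := by
  obtain ⟨w, rfl⟩ := RingQuot.mkAlgHom_surjective F₀ (Rel a) x
  rw [K, ← map_mul, ← map_mul]
  exact RingQuot.mkAlgHom_rel F₀ (Rel.sd1 i m w)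

lemma E_comm {i j : I} (m : ℤ) (h : a i j = 0) :
    E a i m * E a j m = E a j m * E a i m := by
  rw [E, E, ← map_mul, ← map_mul]
  exact RingQuot.mkAlgHom_rel F₀ (Rel.sd2 i j m h)

lemma map_Kinv_eq (φ ψ : A a →ₐ[F₀] A a) (k : I) (m : ℤ)
    (h : φ (K a k m) = ψ (K a k m)) : φ (Kinv a k m) = ψ (Kinv a k m) := by
  have h1 : φ (K a k m) * φ (Kinv a k m) = 1 := by rw [← map_mul, K_mul_Kinv, map_one]
  have h2 : ψ (Kinv a k m) * ψ (K a k m) = 1 := by rw [← map_mul, Kinv_mul_K, map_one]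
  calc φ (Kinv a k m) = (ψ (Kinv a k m) * ψ (K a k m)) * φ (Kinv a k m) := by
        rw [h2, one_mul]
    _ = ψ (Kinv a k m) * (φ (K a k m) * φ (Kinv a k m)) := by rw [← h, mul_assoc]
    _ = ψ (Kinv a k m) := by rw [h1, mul_one]

lemma key {R : Type} [Ring R] [Algebra F₀ R] (c s t : F₀) (x y z : R) (h : x * y = y * x) :
    c • (s • (y * (c • (s • (x * z) - t • (z * x)))) -
        t • ((c • (s • (x * z) - t • (z * x))) * y))
      = c • (s • (x * (c • (s • (y * z) - t • (z * y)))) -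
        t • ((c • (s • (y * z) - t • (z * y))) * x)) := by
  have h1 : y * (x * z) = x * (y * z) := by rw [← mul_assoc, ← h, mul_assoc]
  have h2 : (z * x) * y = (z * y) * x := by rw [mul_assoc, h, ← mul_assoc]
  have h3 : y * (z * x) = (y * z) * x := (mul_assoc _ _ _).symm
  have h4 : (x * z) * y = x * (z * y) := mul_assoc _ _ _
  simp only [smul_sub, mul_sub, sub_mul, mul_smul_comm, smul_mul_assoc, smul_smul,
    h1, h2, h3, h4]
  simp only [mul_comm, mul_left_comm, mul_assoc]
  abel

end Aux

end SDHall

open SDHall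

/-- For `i ≠ j` with `a_{ij} = 0`, the automorphisms `σᵢ`, `σⱼ` of `𝒜`
commute: `σᵢ ∘ σⱼ = σⱼ ∘ σᵢ`. -/
theorem sigma_commute (I : Type) [Fintype I] (a : I → I → ℤ)
    (hA : IsCartan a) (i j : I) (hne : i ≠ j) (hij : a i j = 0)
    (σi σj : A a →ₐ[F₀] A a) (hi : SigmaSpec a i σi) (hj : SigmaSpec a j σj) :
    σi.comp σj = σj.comp σi := by
  obtain ⟨hsym, _hdiag, hoff⟩ := hA
  have hji : a j i = 0 := (hsym j i).trans hij
  obtain ⟨hiE, hiT, hiE0, hiK, hiKm, hiK0⟩ := hi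
  obtain ⟨hjE, hjT, hjE0, hjK, hjKm, hjK0⟩ := hj
  have hjKinv : ∀ m, σj (Kinv a i m) = Kinv a i m := by
    intro m
    have := map_Kinv_eq σj (AlgHom.id F₀ (A a)) i m (by simpa using hjK0 i m hji)
    simpa using this
  have hiKinv : ∀ m, σi (Kinv a j m) = Kinv a j m := by
    intro m
    have := map_Kinv_eq σi (AlgHom.id F₀ (A a)) j m (by simpa using hiK0 j m hij)
    simpa using this
  have hE : ∀ (k : I) (m : ℤ), σi (σj (E a k m)) = σj (σi (E a k m)) := by
    intro k m
    by_cases hki : k = i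
    · subst hki
      rw [hjE0 k m hji, hiE m, map_mul, hjE0 k (m + 1) hji, hjKinv m]
    by_cases hkj : k = j
    · subst hkj
      rw [hjE m, map_mul, hiE0 k (m + 1) hij, hiKinv m, hiE0 k m hij, hjE m]
    rcases hoff i k (fun h => hki h.symm) with h1 | h1 <;>
      rcases hoff j k (fun h => hkj h.symm) with h2 | h2
    · rw [hjE0 k m h2, hiE0 k m h1, hjE0 k m h2]
    · simp only [hiE0 k m h1, hjT k m h2, T, map_smul, map_sub, map_mul,
        hiE0 j m hij]
    · simp only [hjE0 k m h2, hiT k m h1, T, map_smul, map_sub, map_mul,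
        hjE0 i m hji]
    · rw [hjT k m h2, hiT k m h1]
      have eL : σi (T a j k m) = (v - v⁻¹)⁻¹ • (sq • (E a j m * T a i k m) -
          sq⁻¹ • (T a i k m * E a j m)) := by
        simp only [T, map_smul, map_sub, map_mul, hiE0 j m hij, hiT k m h1]
      have eR : σj (T a i k m) = (v - v⁻¹)⁻¹ • (sq • (E a i m * T a j k m) -
          sq⁻¹ • (T a j k m * E a i m)) := by
        simp only [T, map_smul, map_sub, map_mul, hjE0 i m hji, hjT k m h2]
      rw [eL, eR]
      simp only [T]
      exact key _ _ _ _ _ _ (E_comm m hij)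
  have hK : ∀ (k : I) (m : ℤ), σi (σj (K a k m)) = σj (σi (K a k m)) := by
    intro k m
    by_cases hki : k = i
    · subst hki
      rw [hjK0 k m hji, hiK m, hjKinv m]
    by_cases hkj : k = j
    · subst hkj
      rw [hjK m, hiKinv m, hiK0 k m hij, hjK m]
    rcases hoff i k (fun h => hki h.symm) with h1 | h1 <;>
      rcases hoff j k (fun h => hkj h.symm) with h2 | h2
    · rw [hjK0 k m h2, hiK0 k m h1, hjK0 k m h2]
    · simp only [hiK0 k m h1, hjKm k m h2, map_mul, hiK0 j m hij]
    · simp only [hjK0 k m h2, hiKm k m h1, map_mul, hjK0 i m hji]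
    · simp only [hjKm k m h2, hiKm k m h1, map_mul, hiK0 j m hij, hjK0 i m hji]
      rw [← mul_assoc, ← mul_assoc, K_central i m (K a j m)]
  apply RingQuot.ringQuot_ext'
  apply FreeAlgebra.hom_ext
  funext g
  cases g with
  | E k m => exact hE k m
  | K k m => exact hK k m
  | Kinv k m => exact map_Kinv_eq (σi.comp σj) (σj.comp σi) k m (hK k m)
end
end

section
/- Let i, j, k ∈ I with a_{ij} = −1, a_{ik} = −1 and a_{jk} = 0, and let m ∈ ℤ. Set F := (v^{1/2}E_{k,m}E_{i,m} − v^{−1/2}E_{i,m}E_{k,m})/(v − v^{−1}) in 𝒜. Then the quantum Serre relation holds for F and E_{j,m}: F²E_{j,m} − (v + v^{−1})F E_{j,m} F + E_{j,m}F² = 0. -/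
/-!
Braid group action on the twisted semi-derived Hall algebra (Contu, arXiv:2410.18604).

We work with the algebra `𝒜 = 𝒮𝒟ℋ_tw(C^b(𝒫))` given by its presentation
(Proposition `prop_presenentation_semiderived_E_i` of the paper): generators
`E_{i,m}`, `K_{i,m}`, `K_{i,m}⁻¹` (`i ∈ I`, `m ∈ ℤ`) over `F = ℚ(v^{1/2})`,
subject to the relations (SD0)–(SD5).
-/

noncomputable section

open SDHall

/-!
With `X = E_{k,m}`, `Y = E_{i,m}`, `Z = E_{j,m}` and `s = v^{1/2}`, the element `F` is a scalar
multiple of the `s`-commutator `s XY − s⁻¹ YX`, and the Serre expression is homogeneous of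
degree two in its first argument. In any algebra, `(v + v⁻¹)` times the Serre expression of
`s XY − s⁻¹ YX` and `Z` is an explicit two-sided combination of `[Z, X]` and of the Serre
expressions of `(X, Y)`, `(Y, X)` and `(Y, Z)`; all four vanish in `𝒜` by (SD2) and (SD3).
-/

namespace SDHall

section QuantumSerre

variable {𝕜 R : Type*} [Field 𝕜] [Ring R] [Algebra 𝕜 R]

def serre (q : 𝕜) (x y : R) : R :=
  x ^ 2 * y - (q + q⁻¹) • (x * y * x) + y * x ^ 2

def qComm (s : 𝕜) (x y : R) : R :=
  s • (x * y) - s⁻¹ • (y * x)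

lemma serre_smul_left (q c : 𝕜) (x y : R) : serre q (c • x) y = (c ^ 2) • serre q x y := by
  simp only [serre, smul_pow, smul_mul_assoc, mul_smul_comm, smul_smul, smul_sub, smul_add]
  match_scalars <;> ring

set_option maxHeartbeats 1000000 in
lemma smul_serre_qComm (s : 𝕜) (hs : s ≠ 0) (X Y Z : R) :
    (s ^ 2 + (s ^ 2)⁻¹) • serre (s ^ 2) (qComm s X Y) Z =
      (s ^ 2 + (s ^ 2)⁻¹) • (⁅Z, X⁆ * X * Y ^ 2) + s ^ 2 • (X * ⁅Z, X⁆ * Y ^ 2)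
      - (s ^ 2 * (s ^ 2 + (s ^ 2)⁻¹) ^ 2) • (X * Y * ⁅Z, X⁆ * Y)
      + (s ^ 2 + (s ^ 2)⁻¹) • (X * Y ^ 2 * ⁅Z, X⁆)
      - ((s ^ 2)⁻¹ * (s ^ 2 + (s ^ 2)⁻¹)) • (⁅Z, X⁆ * Y * X * Y)
      - ((s ^ 2)⁻¹ * (s ^ 2 + (s ^ 2)⁻¹)) • (Y * ⁅Z, X⁆ * X * Y)
      + (s ^ 2 * (s ^ 2 + (s ^ 2)⁻¹)) • (Y * X * ⁅Z, X⁆ * Y)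
      - s ^ 2 • (⁅Z, X⁆ * Y ^ 2 * X)
      + ((s ^ 2)⁻¹ * (s ^ 2 + (s ^ 2)⁻¹) ^ 2) • (Y * ⁅Z, X⁆ * Y * X)
      - (s ^ 2)⁻¹ • (Y ^ 2 * ⁅Z, X⁆ * X)
      - (s ^ 2)⁻¹ • (Y ^ 2 * X * ⁅Z, X⁆)
      + (s ^ 2)⁻¹ • (serre (s ^ 2) Y Z * X ^ 2)
      - (s ^ 2 + (s ^ 2)⁻¹) • (X * serre (s ^ 2) Y Z * X)
      + s ^ 2 • (X ^ 2 * serre (s ^ 2) Y Z)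
      - (s ^ 2)⁻¹ • (serre (s ^ 2) Y X * X * Z)
      + (s ^ 2)⁻¹ • (X * serre (s ^ 2) Y X * Z)
      + (s ^ 2)⁻¹ • (X * Z * serre (s ^ 2) Y X)
      - (s ^ 2)⁻¹ • (Z * serre (s ^ 2) Y X * X)
      - (s ^ 2 + (s ^ 2)⁻¹) • (serre (s ^ 2) X Y * Y * Z)
      + ((s ^ 2)⁻¹ * (s ^ 2 + (s ^ 2)⁻¹)) • (Y * Z * serre (s ^ 2) X Y)
      + (s ^ 2 * (s ^ 2 + (s ^ 2)⁻¹)) • (serre (s ^ 2) X Y * Z * Y)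
      - (s ^ 2 + (s ^ 2)⁻¹) • (Z * serre (s ^ 2) X Y * Y) := by
  simp only [serre, qComm, Ring.lie_def, pow_two, mul_add, add_mul, mul_sub, sub_mul,
    smul_mul_assoc, mul_smul_comm, smul_sub, smul_add, smul_smul, mul_assoc]
  match_scalars <;> field_simp <;> ring

lemma serre_qComm_eq_zero {s : 𝕜} (hs : s ≠ 0) (hq : s ^ 2 + (s ^ 2)⁻¹ ≠ 0) {X Y Z : R}
    (hZX : Commute Z X) (hYZ : serre (s ^ 2) Y Z = 0) (hYX : serre (s ^ 2) Y X = 0)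
    (hXY : serre (s ^ 2) X Y = 0) : serre (s ^ 2) (qComm s X Y) Z = 0 := by
  have hc : ⁅Z, X⁆ = 0 := by rw [Ring.lie_def, hZX.eq, sub_self]
  have h := smul_serre_qComm s hs X Y Z
  simp only [hc, hYZ, hYX, hXY, mul_zero, zero_mul, smul_zero, add_zero, sub_zero] at h
  exact (smul_eq_zero.mp h).resolve_left hq

end QuantumSerre

lemma sq_ne_zero : sq ≠ 0 := RatFunc.X_ne_zero

lemma v_add_inv_ne_zero : v + v⁻¹ ≠ 0 := by
  have h : v + v⁻¹ = algebraMap (Polynomial ℚ) F₀ (Polynomial.X ^ 4 + 1) / sq ^ 2 := by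
    rw [eq_div_iff (pow_ne_zero 2 sq_ne_zero), v]
    field_simp [sq_ne_zero]
    simp [sq, RatFunc.algebraMap_X]
  rw [h]
  refine div_ne_zero (RatFunc.algebraMap_ne_zero fun hc => ?_) (pow_ne_zero _ sq_ne_zero)
  simpa using congrArg (Polynomial.eval 0) hc

variable {I : Type} {a : I → I → ℤ} {i j : I}

lemma commute_E (h : a i j = 0) (m : ℤ) : Commute (E a i m) (E a j m) := by
  have hE := RingQuot.mkAlgHom_rel F₀ (Rel.sd2 i j m h)
  rwa [map_mul, map_mul] at hE

lemma serre_E (h : a i j = -1) (m : ℤ) : serre v (E a i m) (E a j m) = 0 := by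
  simpa only [serre, map_add, map_sub, map_mul, map_pow, map_smul, map_zero, E] using
    RingQuot.mkAlgHom_rel F₀ (Rel.sd3 i j m h)

lemma T_eq (i j : I) (m : ℤ) : T a i j m = (v - v⁻¹)⁻¹ • qComm sq (E a i m) (E a j m) := rfl

end SDHall

open SDHall

theorem serre_mixed_general (I : Type) (a : I → I → ℤ)
    (hA : IsCartan a) (i j k : I) (hij : a i j = -1) (hik : a i k = -1)
    (hjk : a j k = 0) (m : ℤ) :
    (T a k i m) ^ 2 * E a j m
      - (v + v⁻¹) • (T a k i m * E a j m * T a k i m)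
      + E a j m * (T a k i m) ^ 2 = 0 := by
  have hki : a k i = -1 := hA.1 k i ▸ hik
  have hF : serre (sq ^ 2) (qComm sq (E a k m) (E a i m)) (E a j m) = 0 :=
    serre_qComm_eq_zero sq_ne_zero v_add_inv_ne_zero (commute_E hjk m)
      (serre_E hij m) (serre_E hik m) (serre_E hki m)
  change serre v (T a k i m) (E a j m) = 0
  rw [T_eq, serre_smul_left, v, hF, smul_zero]

/-- For `a_{ij} = −1`, `a_{ik} = −1`, `a_{jk} = 0` and `m ∈ ℤ`, set
`F := (v^{1/2}E_{k,m}E_{i,m} − v^{−1/2}E_{i,m}E_{k,m})/(v − v^{−1})`. Then the quantum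
Serre relation `F²E_{j,m} − (v + v⁻¹)F E_{j,m} F + E_{j,m}F² = 0` holds in `𝒜`. -/
theorem serre_mixed (I : Type) [Fintype I] (a : I → I → ℤ)
    (hA : IsCartan a) (i j k : I) (hij : a i j = -1) (hik : a i k = -1)
    (hjk : a j k = 0) (m : ℤ) :
    (T a k i m) ^ 2 * E a j m
      - (v + v⁻¹) • (T a k i m * E a j m * T a k i m)
      + E a j m * (T a k i m) ^ 2 = 0 :=
  serre_mixed_general I a hA i j k hij hik hjk m
end
end
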